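/- arXiv:1712.02652 — 5 statements merged into one kernel-verified Lean document; each statement's English description precedes it below -/
import Mathlib

section
/- In the category Gpd of groupoids, if g : A → B is a fibration (an isofibration: every isomorphism in B with a lift of its domain lifts to A) and f : C → B is an injective-on-objects equivalence of groupoids, then the pullback of f along g is again an injective-on-objects equivalence of groupoids. -/
/-!
A functor out of the walking isomorphism is the same as an arrow of the target groupoid, so
testing the universal property of the strict pullback `P` against it shows that the arrows of `P`
form the pullback of the sets of arrows of `A` and `C` over those of `B`. Hence `p₁` is injective
on objects, faithful and full because `f` is. Essential surjectivity is where the isofibration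
enters: given `a : A`, choose `c` with `f c ≅ g a`; lifting this isomorphism along `g` gives
`a ≅ a'` with `g a' = f c`, and `(a', c)` is an object of `P`.
-/

open CategoryTheory

universe u

def IsIsoFib {A B : Type*} [Category A] [Category B] (g : A ⥤ B) : Prop :=
  ∀ (x : A) (b : B) (φ : g.obj x ≅ b), ∃ (y : A) (ψ : x ≅ y) (h : g.obj y = b),
    g.map ψ.hom = φ.hom ≫ eqToHom h.symm

universe w

/- Lifting the morphisms to universe `w` makes the walking isomorphism a legitimate test object
for a universal property quantifying over groupoids with morphisms in an arbitrary universe. -/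
noncomputable instance {α : Type*} : Groupoid (ULiftHom.{w} (Codiscrete α)) :=
  Groupoid.ofIsIso fun _ => ⟨⟨⟨()⟩, rfl, rfl⟩⟩

lemma CategoryTheory.Functor.mapArrow_obj_mk_id {D E : Type*} [Category D] [Category E]
    (F : D ⥤ E) (X : D) : F.mapArrow.obj (Arrow.mk (𝟙 X)) = Arrow.mk (𝟙 (F.obj X)) := by
  simp

namespace CategoryTheory.WalkingIso

variable {D E : Type*} [Groupoid D] [Groupoid E]

noncomputable def fromArrow (φ : Arrow D) : ULiftHom.{w} WalkingIso.{u} ⥤ D :=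
  ULiftHom.down ⋙ fromIso (asIso φ.hom)

def toArrow (F : ULiftHom.{w} WalkingIso.{u} ⥤ D) : Arrow D :=
  Arrow.mk (F.map (ULiftHom.up.map iso.hom))

lemma toArrow_fromArrow (φ : Arrow D) : toArrow (fromArrow.{u, w} φ) = φ := rfl

lemma toArrow_comp (G : ULiftHom.{w} WalkingIso.{u} ⥤ D) (F : D ⥤ E) :
    toArrow (G ⋙ F) = F.mapArrow.obj (toArrow G) := rfl

lemma fromArrow_comp (φ : Arrow D) (F : D ⥤ E) :
    fromArrow.{u, w} φ ⋙ F = fromArrow (F.mapArrow.obj φ) := by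
  have : fromIso.{u} (asIso φ.hom) ⋙ F = fromIso (asIso (F.map φ.hom)) :=
    equiv.injective <| by
      change (⟨_, _, F.mapIso (asIso φ.hom)⟩ : Σ X Y : E, X ≅ Y) = ⟨_, _, asIso (F.map φ.hom)⟩
      congr 2
      ext
      rfl
  exact congrArg (ULiftHom.down ⋙ ·) this

end CategoryTheory.WalkingIso

def IsStrictPullback {A B C P : Type u} [Groupoid A] [Groupoid B] [Groupoid C] [Groupoid P]
    (g : A ⥤ B) (f : C ⥤ B) (p₁ : P ⥤ A) (p₂ : P ⥤ C) : Prop :=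
  p₁ ⋙ g = p₂ ⋙ f ∧ ∀ (Q : Type u) [Groupoid.{w} Q] (q₁ : Q ⥤ A) (q₂ : Q ⥤ C),
    q₁ ⋙ g = q₂ ⋙ f → ∃! L : Q ⥤ P, L ⋙ p₁ = q₁ ∧ L ⋙ p₂ = q₂

namespace IsStrictPullback

open WalkingIso

variable {A B C P : Type u} [Groupoid A] [Groupoid B] [Groupoid C] [Groupoid P]
  {g : A ⥤ B} {f : C ⥤ B} {p₁ : P ⥤ A} {p₂ : P ⥤ C} (hP : IsStrictPullback.{u, w} g f p₁ p₂)
include hP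

lemma obj_comm (z : P) : g.obj (p₁.obj z) = f.obj (p₂.obj z) :=
  Functor.congr_obj hP.1 z

lemma mapArrow_comm (π : Arrow P) :
    g.mapArrow.obj (p₁.mapArrow.obj π) = f.mapArrow.obj (p₂.mapArrow.obj π) :=
  congrArg (fun F => F.mapArrow.obj π) hP.1

lemma existsUnique_arrow {α : Arrow A} {γ : Arrow C}
    (h : g.mapArrow.obj α = f.mapArrow.obj γ) :
    ∃! π : Arrow P, p₁.mapArrow.obj π = α ∧ p₂.mapArrow.obj π = γ := by
  obtain ⟨L, ⟨hL₁, hL₂⟩, hL⟩ := hP.2 (ULiftHom.{w} WalkingIso.{u}) (fromArrow α) (fromArrow γ)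
    (by rw [fromArrow_comp, fromArrow_comp, h])
  refine ⟨toArrow L, ⟨?_, ?_⟩, fun π ⟨h₁, h₂⟩ => ?_⟩
  · rw [← toArrow_comp, hL₁, toArrow_fromArrow]
  · rw [← toArrow_comp, hL₂, toArrow_fromArrow]
  · rw [← hL (fromArrow π) ⟨by rw [fromArrow_comp, h₁], by rw [fromArrow_comp, h₂]⟩,
      toArrow_fromArrow]

lemma obj_ext {z z' : P} (h₁ : p₁.obj z = p₁.obj z') (h₂ : p₂.obj z = p₂.obj z') : z = z' := by
  have h : Arrow.mk (𝟙 z) = Arrow.mk (𝟙 z') :=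
    (hP.existsUnique_arrow (hP.mapArrow_comm (Arrow.mk (𝟙 z)))).unique ⟨rfl, rfl⟩
      ⟨by rw [Functor.mapArrow_obj_mk_id, Functor.mapArrow_obj_mk_id, h₁],
        by rw [Functor.mapArrow_obj_mk_id, Functor.mapArrow_obj_mk_id, h₂]⟩
  exact congrArg Arrow.left h

lemma hom_ext {z z' : P} {φ ψ : z ⟶ z'} (h₁ : p₁.map φ = p₁.map ψ) (h₂ : p₂.map φ = p₂.map ψ) :
    φ = ψ :=
  Arrow.mk_injective _ _ <|
    (hP.existsUnique_arrow (hP.mapArrow_comm (Arrow.mk φ))).unique ⟨rfl, rfl⟩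
      ⟨by simp [h₁], by simp [h₂]⟩

lemma exists_obj {a : A} {c : C} (h : g.obj a = f.obj c) :
    ∃ z : P, p₁.obj z = a ∧ p₂.obj z = c := by
  obtain ⟨π, ⟨h₁, h₂⟩, -⟩ :=
    hP.existsUnique_arrow (α := Arrow.mk (𝟙 a)) (γ := Arrow.mk (𝟙 c))
      (by rw [Functor.mapArrow_obj_mk_id, Functor.mapArrow_obj_mk_id, h])
  exact ⟨π.left, congrArg Arrow.left h₁, congrArg Arrow.left h₂⟩

lemma exists_hom {z z' : P} (α : p₁.obj z ⟶ p₁.obj z') (γ : p₂.obj z ⟶ p₂.obj z')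
    (h : g.mapArrow.obj (Arrow.mk α) = f.mapArrow.obj (Arrow.mk γ)) :
    ∃ φ : z ⟶ z', p₁.map φ = α := by
  obtain ⟨π, ⟨h₁, h₂⟩, -⟩ := hP.existsUnique_arrow h
  obtain ⟨y, y', φ, rfl⟩ := Arrow.mk_surjective π
  obtain rfl : y = z := hP.obj_ext (congrArg Arrow.left h₁) (congrArg Arrow.left h₂)
  obtain rfl : y' = z' := hP.obj_ext (congrArg Arrow.right h₁) (congrArg Arrow.right h₂)
  exact ⟨φ, (Arrow.mk_inj _ _).1 h₁⟩

lemma injective_obj (hf : Function.Injective f.obj) : Function.Injective p₁.obj :=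
  fun z z' h => hP.obj_ext h <| hf <| by rw [← hP.obj_comm, ← hP.obj_comm, h]

lemma faithful [f.Faithful] : p₁.Faithful where
  map_injective {z z'} φ ψ h := hP.hom_ext h <| f.map_injective <| Arrow.mk_injective _ _ <|
    calc Arrow.mk (f.map (p₂.map φ))
      _ = g.mapArrow.obj (p₁.mapArrow.obj (Arrow.mk φ)) := (hP.mapArrow_comm (Arrow.mk φ)).symm
      _ = g.mapArrow.obj (p₁.mapArrow.obj (Arrow.mk ψ)) := by simp [h]
      _ = Arrow.mk (f.map (p₂.map ψ)) := hP.mapArrow_comm (Arrow.mk ψ)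

lemma full [f.Full] : p₁.Full where
  map_surjective {z z'} α := hP.exists_hom α
    (f.preimage (eqToHom (hP.obj_comm z).symm ≫ g.map α ≫ eqToHom (hP.obj_comm z'))) (by simp)

lemma essSurj (hg : IsIsoFib g) [f.EssSurj] : p₁.EssSurj where
  mem_essImage a := by
    obtain ⟨a', ψ, h, -⟩ := hg a _ (f.objObjPreimageIso (g.obj a)).symm
    obtain ⟨z, rfl, -⟩ := hP.exists_obj h
    exact ⟨z, ⟨ψ.symm⟩⟩

end IsStrictPullback

/-- the pullback of an injective-on-objects equivalence of groupoids
along an isofibration is again an injective-on-objects equivalence. -/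
theorem stmt1 {A B C P : Type u} [Groupoid A] [Groupoid B] [Groupoid C] [Groupoid P]
    (g : A ⥤ B) (f : C ⥤ B)
    (hg : IsIsoFib g)
    (hfinj : Function.Injective f.obj) (hfeq : f.IsEquivalence)
    (p₁ : P ⥤ A) (p₂ : P ⥤ C)
    (hcomm : p₁ ⋙ g = p₂ ⋙ f)
    (huniv : ∀ (Q : Type u) [Groupoid Q] (q₁ : Q ⥤ A) (q₂ : Q ⥤ C),
      q₁ ⋙ g = q₂ ⋙ f → ∃! u : Q ⥤ P, u ⋙ p₁ = q₁ ∧ u ⋙ p₂ = q₂) :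
    Function.Injective p₁.obj ∧ p₁.IsEquivalence := by
  have hP : IsStrictPullback g f p₁ p₂ := ⟨hcomm, huniv⟩
  exact ⟨hP.injective_obj hfinj,
    { faithful := hP.faithful, full := hP.full, essSurj := hP.essSurj hg }⟩
end

section
/- Let (A, α) be a groupoid with involution in which every object is a fixed point, i.e. α(x) = x for all objects x, and let w : B → C be an equivariant functor that is an injective-on-objects equivalence of groupoids inducing a bijection on fixed-point objects. Then for every equivariant functor v : A → C there exists an equivariant functor v̂ : A → B with w ∘ v̂ = v. -/
open CategoryTheory

universe w v u

structure GpdInv where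
  carrier : Type u
  [str : Groupoid.{v} carrier]
  inv : carrier ⥤ carrier
  inv_inv : inv ⋙ inv = 𝟭 carrier

attribute [instance] GpdInv.str

/-- An equivariant functor between groupoids with involution. -/
def GpdInv.Equivariant (A B : GpdInv) (f : A.carrier ⥤ B.carrier) : Prop :=
  A.inv ⋙ f = f ⋙ B.inv

/-- A fixed point of the involution. -/
def GpdInv.Fixed (A : GpdInv) (x : A.carrier) : Prop := A.inv.obj x = x

/-- lifting against acyclic cofibrations from objects all of whose
points are fixed. -/
theorem stmt7 (A B C : GpdInv) (hA : ∀ x : A.carrier, A.Fixed x)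
    (w : B.carrier ⥤ C.carrier) (hw : GpdInv.Equivariant B C w)
    (hwinj : Function.Injective w.obj) (hweq : w.IsEquivalence)
    (hwfix : Set.BijOn w.obj {x | B.Fixed x} {y | C.Fixed y})
    (v : A.carrier ⥤ C.carrier) (hv : GpdInv.Equivariant A C v) :
    ∃ vhat : A.carrier ⥤ B.carrier, GpdInv.Equivariant A B vhat ∧ vhat ⋙ w = v := by
  haveI := hweq
  have hvfix : ∀ x : A.carrier, C.Fixed (v.obj x) := by
    intro x
    have h := Functor.congr_obj hv x
    simp only [Functor.comp_obj] at h
    rw [hA x] at h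
    exact h.symm
  choose b hbfix hbw using fun x => hwfix.surjOn (hvfix x)
  let vhat : A.carrier ⥤ B.carrier :=
  { obj := b
    map := fun {x y} f => w.preimage (eqToHom (hbw x) ≫ v.map f ≫ eqToHom (hbw y).symm)
    map_id := by
      intro x
      apply w.map_injective
      simp
    map_comp := by
      intro x y z f g
      apply w.map_injective
      simp }
  have cancel : ∀ (F G : A.carrier ⥤ B.carrier), F ⋙ w = G ⋙ w → F = G := by
    intro F G h
    have hobj : ∀ x, F.obj x = G.obj x := fun x => hwinj (Functor.congr_obj h x)
    refine CategoryTheory.Functor.ext hobj fun x y f => ?_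
    apply w.map_injective
    have hm := Functor.congr_hom h f
    simp only [Functor.comp_map] at hm
    simp [hm, eqToHom_map]
  have hcomp : vhat ⋙ w = v := by
    refine CategoryTheory.Functor.ext (fun x => hbw x) fun x y f => ?_
    simp [vhat]
  refine ⟨vhat, ?_, hcomp⟩
  apply cancel
  show A.inv ⋙ (vhat ⋙ w) = (vhat ⋙ B.inv) ⋙ w
  rw [hcomp]
  calc A.inv ⋙ v = v ⋙ C.inv := hv
    _ = (vhat ⋙ w) ⋙ C.inv := by rw [hcomp]
    _ = vhat ⋙ (B.inv ⋙ w) := by rw [Functor.assoc, ← hw]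
    _ = (vhat ⋙ B.inv) ⋙ w := rfl
end

section
/- Let E be the groupoid with involution whose objects are triples (x, y, φ) with x, y objects of U and φ : x → y an isomorphism in U, with the evident morphisms, and involution (x, y, φ) ↦ (υ(x), υ(y), υ(φ)) where υ is the involution of U. Then the equivariant functor U → E sending x to (x, x, 1_x) is not surjective onto the fixed points of E; in particular, the triple ((ℤ,ℤ,id_ℤ), (ℤ,ℤ,id_ℤ), (n ↦ −n, n ↦ −n)) is a fixed point of E not in the image. -/
open CategoryTheory Cardinal

universe u

/-- An object of the universe U : a pair of κ-small sets with a bijection. -/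
structure UObj (κ : Cardinal.{u}) where
  A : Type u
  B : Type u
  hA : Cardinal.mk A < κ
  hB : Cardinal.mk B < κ
  e : A ≃ B

instance {κ : Cardinal.{u}} : Groupoid (UObj κ) where
  Hom X Y := {p : (X.A ≃ Y.A) × (X.B ≃ Y.B) // ∀ a, Y.e (p.1 a) = p.2 (X.e a)}
  id X := ⟨(Equiv.refl _, Equiv.refl _), fun _ => rfl⟩
  comp {X Y Z} p q := ⟨(p.1.1.trans q.1.1, p.1.2.trans q.1.2), fun a => by
    simp only [Equiv.trans_apply]; rw [q.2, p.2]⟩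
  id_comp p := Subtype.ext (Prod.ext (Equiv.refl_trans _) (Equiv.refl_trans _))
  comp_id p := Subtype.ext (Prod.ext (Equiv.trans_refl _) (Equiv.trans_refl _))
  assoc p q r := Subtype.ext (Prod.ext (Equiv.trans_assoc _ _ _).symm (Equiv.trans_assoc _ _ _).symm)
  inv {X Y} p := ⟨(p.1.1.symm, p.1.2.symm), fun a => p.1.2.injective (by
    rw [← p.2, Equiv.apply_symm_apply, Equiv.apply_symm_apply])⟩
  inv_comp p := Subtype.ext (Prod.ext (Equiv.symm_trans_self _) (Equiv.symm_trans_self _))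
  comp_inv p := Subtype.ext (Prod.ext (Equiv.self_trans_symm _) (Equiv.self_trans_symm _))

/-- The involution on U : swap the two sets. -/
def Uinv (κ : Cardinal.{u}) : UObj κ ⥤ UObj κ where
  obj X := ⟨X.B, X.A, X.hB, X.hA, X.e.symm⟩
  map {X Y} p := ⟨(p.1.2, p.1.1), fun b => Y.e.symm_apply_eq.mpr (by
    rw [p.2, Equiv.apply_symm_apply])⟩
  map_id _ := Subtype.ext rfl
  map_comp _ _ := Subtype.ext rfl

/-- An object of the universe Ũ : a pair of κ-small sets with a bijection and a
point (recorded symmetrically by its matched pair). -/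
structure UtObj (κ : Cardinal.{u}) extends UObj κ where
  pt : A
  pt2 : B
  hpt : e pt = pt2

instance {κ : Cardinal.{u}} : Groupoid (UtObj κ) where
  Hom X Y := {p : X.toUObj ⟶ Y.toUObj // p.1.1 X.pt = Y.pt}
  id X := ⟨𝟙 X.toUObj, rfl⟩
  comp {X Y Z} p q := ⟨p.1 ≫ q.1, by
    show q.1.1.1 (p.1.1.1 X.pt) = Z.pt
    rw [p.2, q.2]⟩
  id_comp p := Subtype.ext (Category.id_comp _)
  comp_id p := Subtype.ext (Category.comp_id _)
  assoc p q r := Subtype.ext (Category.assoc _ _ _)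
  inv {X Y} p := ⟨Groupoid.inv p.1, p.1.1.1.symm_apply_eq.mpr p.2.symm⟩
  inv_comp p := Subtype.ext (Groupoid.inv_comp _)
  comp_inv p := Subtype.ext (Groupoid.comp_inv _)

/-- The involution on Ũ. -/
def Utinv (κ : Cardinal.{u}) : UtObj κ ⥤ UtObj κ where
  obj X := ⟨⟨X.B, X.A, X.hB, X.hA, X.e.symm⟩, X.pt2, X.pt, by
    rw [← X.hpt, Equiv.symm_apply_apply]⟩
  map {X Y} p := ⟨(Uinv κ).map p.1, by
    show p.1.1.2 X.pt2 = Y.pt2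
    rw [← X.hpt, ← p.1.2, p.2, Y.hpt]⟩
  map_id _ := Subtype.ext rfl
  map_comp _ _ := Subtype.ext rfl

/-- The universal fibration p : Ũ → U, forgetting the point. -/
def pFun (κ : Cardinal.{u}) : UtObj κ ⥤ UObj κ where
  obj X := X.toUObj
  map p := p.1

/-- The objects of E : isomorphisms of U. -/
def EObj (κ : Cardinal.{u}) := Σ (X : UObj κ) (Y : UObj κ), X ⟶ Y

/-- The involution of E on objects, induced by the involution of U. -/
def Einv (κ : Cardinal.{u}) : EObj κ → EObj κ :=
  fun w => ⟨(Uinv κ).obj w.1, (Uinv κ).obj w.2.1, (Uinv κ).map w.2.2⟩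

/-- The map U → E on objects, sending x to its identity. -/
def unitE (κ : Cardinal.{u}) : UObj κ → EObj κ := fun X => ⟨X, X, 𝟙 X⟩

theorem UObj.hom_eq_id_of_unitE_eq {κ : Cardinal.{u}} {x X : UObj κ} {f : X ⟶ X}
    (h : unitE κ x = ⟨X, X, f⟩) : f = 𝟙 X := by
  obtain ⟨rfl, h⟩ := Sigma.mk.inj_iff.mp h
  exact (eq_of_heq (Sigma.mk.inj_iff.mp (eq_of_heq h)).2).symm

theorem stmt14_general (κ : Cardinal.{0}) (hZ : Cardinal.mk ℤ < κ) :
    Einv κ ⟨⟨ℤ, ℤ, hZ, hZ, Equiv.refl ℤ⟩, ⟨ℤ, ℤ, hZ, hZ, Equiv.refl ℤ⟩,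
        ⟨(Equiv.neg ℤ, Equiv.neg ℤ), fun _ => rfl⟩⟩ =
      ⟨⟨ℤ, ℤ, hZ, hZ, Equiv.refl ℤ⟩, ⟨ℤ, ℤ, hZ, hZ, Equiv.refl ℤ⟩,
        ⟨(Equiv.neg ℤ, Equiv.neg ℤ), fun _ => rfl⟩⟩ ∧
    ∀ x : UObj κ, unitE κ x ≠
      ⟨⟨ℤ, ℤ, hZ, hZ, Equiv.refl ℤ⟩, ⟨ℤ, ℤ, hZ, hZ, Equiv.refl ℤ⟩,
        ⟨(Equiv.neg ℤ, Equiv.neg ℤ), fun _ => rfl⟩⟩ := by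
  refine ⟨rfl, fun x h => ?_⟩
  have hneg : (-1 : ℤ) = 1 := congrArg (fun f => f.1.1 1) (UObj.hom_eq_id_of_unitE_eq h)
  exact absurd hneg (by decide)

/-- the map U → E is not surjective onto fixed points of E; the triple
((ℤ,ℤ,id), (ℤ,ℤ,id), (n ↦ -n, n ↦ -n)) is a fixed point of E not in the image. -/
theorem stmt14 (κ : Cardinal.{0}) (hκ : κ.IsInaccessible) (hZ : Cardinal.mk ℤ < κ) :
    Einv κ ⟨⟨ℤ, ℤ, hZ, hZ, Equiv.refl ℤ⟩, ⟨ℤ, ℤ, hZ, hZ, Equiv.refl ℤ⟩,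
        ⟨(Equiv.neg ℤ, Equiv.neg ℤ), fun _ => rfl⟩⟩ =
      ⟨⟨ℤ, ℤ, hZ, hZ, Equiv.refl ℤ⟩, ⟨ℤ, ℤ, hZ, hZ, Equiv.refl ℤ⟩,
        ⟨(Equiv.neg ℤ, Equiv.neg ℤ), fun _ => rfl⟩⟩ ∧
    ∀ x : UObj κ, unitE κ x ≠
      ⟨⟨ℤ, ℤ, hZ, hZ, Equiv.refl ℤ⟩, ⟨ℤ, ℤ, hZ, hZ, Equiv.refl ℤ⟩,
        ⟨(Equiv.neg ℤ, Equiv.neg ℤ), fun _ => rfl⟩⟩ :=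
  stmt14_general κ hZ
end

section
/- Let S(1) = 1 ⊔ 1 with the swap involution and S(I) = I ⊔ I with the swap involution, where I is the walking isomorphism groupoid, and let f : S(I) → S(1) be the unique equivariant functor collapsing each copy of I to a point, and g : S(1) → 1 the unique map to the terminal groupoid with trivial involution. Then the set of equivariant sections of f (equivariant functors s : S(1) → S(I) with f ∘ s = id) has at least two elements. -/
open CategoryTheory

instance plift_subsingleton (p : Prop) : Subsingleton (PLift p) :=
  ⟨fun a b => by cases a; cases b; rfl⟩

/-- The groupoid `S(1) = 1 ⊔ 1`: two objects and only identity morphisms. -/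
structure S1 where
  b : Bool

instance : Groupoid S1 where
  Hom a b := PLift (a.b = b.b)
  id _ := ⟨rfl⟩
  comp f g := ⟨f.down.trans g.down⟩
  id_comp _ := rfl
  comp_id _ := rfl
  assoc _ _ _ := rfl
  inv f := ⟨f.down.symm⟩
  inv_comp _ := rfl
  comp_inv _ := rfl

/-- The groupoid `S(I) = I ⊔ I`: two copies of the walking isomorphism; the field `c`
records the copy, the field `e` the endpoint. -/
structure SI where
  c : Bool
  e : Bool

instance : Groupoid SI where
  Hom a b := PLift (a.c = b.c)
  id _ := ⟨rfl⟩
  comp f g := ⟨f.down.trans g.down⟩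
  id_comp _ := rfl
  comp_id _ := rfl
  assoc _ _ _ := rfl
  inv f := ⟨f.down.symm⟩
  inv_comp _ := rfl
  comp_inv _ := rfl

instance (a b : S1) : Subsingleton (a ⟶ b) := plift_subsingleton _
instance (a b : SI) : Subsingleton (a ⟶ b) := plift_subsingleton _

/-- The swap involution on `S(1)`. -/
def swapS1 : S1 ⥤ S1 where
  obj a := ⟨Bool.not a.b⟩
  map f := ⟨by dsimp; rw [f.down]⟩
  map_id _ := rfl
  map_comp _ _ := rfl

/-- The swap involution on `S(I)`. -/
def swapSI : SI ⥤ SI where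
  obj p := ⟨Bool.not p.c, p.e⟩
  map f := ⟨by dsimp; rw [f.down]⟩
  map_id _ := rfl
  map_comp _ _ := rfl

/-- The inclusion `S(1) ↪ S(I)` picking the two domain endpoints. -/
def S1incl : S1 ⥤ SI where
  obj a := ⟨a.b, false⟩
  map f := ⟨f.down⟩
  map_id _ := rfl
  map_comp _ _ := rfl

/-- The collapse map `S(I) → S(1)` collapsing each copy of `I` to a point. -/
def collapse : SI ⥤ S1 where
  obj p := ⟨p.c⟩
  map f := ⟨f.down⟩
  map_id _ := rfl
  map_comp _ _ := rfl

def endpointSection (e : Bool) : S1 ⥤ SI where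
  obj a := ⟨a.b, e⟩
  map f := ⟨f.down⟩

def IsEquivariantSection (s : S1 ⥤ SI) : Prop :=
  swapS1 ⋙ s = s ⋙ swapSI ∧ s ⋙ collapse = 𝟭 S1

lemma isEquivariantSection_endpointSection (e : Bool) :
    IsEquivariantSection (endpointSection e) :=
  ⟨rfl, rfl⟩

lemma endpointSection_injective : Function.Injective endpointSection := fun _ _ h =>
  congrArg (fun s => (s.obj ⟨false⟩).e) h

/-- the collapse map S(I) → S(1) has at least two equivariant sections. -/
theorem stmt16 :
    ∃ s₁ s₂ : S1 ⥤ SI,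
      s₁ ≠ s₂ ∧
      (swapS1 ⋙ s₁ = s₁ ⋙ swapSI ∧ s₁ ⋙ collapse = 𝟭 S1) ∧
      (swapS1 ⋙ s₂ = s₂ ⋙ swapSI ∧ s₂ ⋙ collapse = 𝟭 S1) := by
  exact ⟨endpointSection false, endpointSection true, endpointSection_injective.ne Bool.false_ne_true,
      isEquivariantSection_endpointSection false, isEquivariantSection_endpointSection true⟩
end

section
/- In a category C equipped with: a terminal object, a class of fibrations containing isomorphisms and all maps to the terminal object, closed under pullback, such that every object is fibrant, every morphism factors as an acyclic cofibration (a map with the left lifting property against all fibrations) followed by a fibration — any acyclic cofibration f : A → B is a right homotopy equivalence: there exists g : B → A with g ∘ f = id_A and a map h : B → PB over B × B witnessing f ∘ g right homotopic to id_B, where PB is any factorization of the diagonal B → B × B into an acyclic cofibration followed by a fibration. -/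
/-!
Lifting `𝟙 A` along `f` against the fibration `A ⟶ T` gives a retraction `g` of `f`. Then
`f ≫ (g ≫ f) = f ≫ 𝟙 B`, and any two maps that agree after precomposition with an acyclic
cofibration are right homotopic: lift the constant path on `f ≫ u` along `f` against the path
fibration `PB ⟶ B × B`.
-/

open CategoryTheory CategoryTheory.Limits

universe v u

section

variable {C : Type u} [Category.{v} C]

theorem CategoryTheory.Limits.IsTerminal.exists_retraction_of_hasLiftingProperty {T A B : C}
    (hT : IsTerminal T) (f : A ⟶ B) [HasLiftingProperty f (hT.from A)] :
    ∃ g : B ⟶ A, f ≫ g = 𝟙 A :=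
  let sq : CommSq (𝟙 A) f (hT.from A) (hT.from B) := ⟨hT.hom_ext _ _⟩
  ⟨sq.lift, sq.fac_left⟩

theorem exists_rightHomotopy_of_comp_eq_of_hasLiftingProperty {A B X XX PX : C}
    {p₁ p₂ : XX ⟶ X} (hXX : IsLimit (BinaryFan.mk p₁ p₂)) {w : X ⟶ PX} {q : PX ⟶ XX}
    (hw₁ : w ≫ q ≫ p₁ = 𝟙 X) (hw₂ : w ≫ q ≫ p₂ = 𝟙 X) (f : A ⟶ B) [HasLiftingProperty f q]
    {u v : B ⟶ X} (huv : f ≫ u = f ≫ v) :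
    ∃ h : B ⟶ PX, h ≫ q ≫ p₁ = u ∧ h ≫ q ≫ p₂ = v := by
  obtain ⟨b, hb₁, hb₂⟩ : ∃ b : B ⟶ XX, b ≫ p₁ = u ∧ b ≫ p₂ = v :=
    ⟨_, (BinaryFan.IsLimit.lift' hXX u v).2⟩
  -- over `XX` rather than `(BinaryFan.mk p₁ p₂).pt`, so that `simp` can reassociate
  have hext : ∀ {x y : A ⟶ XX}, x ≫ p₁ = y ≫ p₁ → x ≫ p₂ = y ≫ p₂ → x = y :=
    BinaryFan.IsLimit.hom_ext hXX
  have sq : CommSq (f ≫ u ≫ w) f q b := ⟨hext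
    (by simp only [Category.assoc, hw₁, hb₁, Category.comp_id])
    (by simp only [Category.assoc, hw₂, hb₂, Category.comp_id, huv])⟩
  exact ⟨sq.lift, by rw [sq.fac_right_assoc, hb₁], by rw [sq.fac_right_assoc, hb₂]⟩

end

theorem stmt18_general {C : Type u} [Category.{v} C]
    (T : C) (hT : IsTerminal T)
    (Fib : MorphismProperty C)
    (hterm : ∀ (X : C) (t : X ⟶ T), Fib t)
    {A B : C} (f : A ⟶ B)
    (hf : ∀ {V W : C} (m : V ⟶ W), Fib m → HasLiftingProperty f m)
    (BB : C) (p₁ p₂ : BB ⟶ B) (hBB : IsLimit (BinaryFan.mk p₁ p₂))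
    (d : B ⟶ BB) (hd₁ : d ≫ p₁ = 𝟙 B) (hd₂ : d ≫ p₂ = 𝟙 B)
    (PB : C) (w : B ⟶ PB) (q : PB ⟶ BB)
    (hq : Fib q) (hwq : w ≫ q = d) :
    ∃ g : B ⟶ A, f ≫ g = 𝟙 A ∧
      ∃ h : B ⟶ PB, h ≫ q ≫ p₁ = g ≫ f ∧ h ≫ q ≫ p₂ = 𝟙 B := by
  have := hf (hT.from A) (hterm A _)
  have := hf q hq
  obtain ⟨g, hg⟩ := hT.exists_retraction_of_hasLiftingProperty f
  refine ⟨g, hg, exists_rightHomotopy_of_comp_eq_of_hasLiftingProperty hBB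
    (by rw [reassoc_of% hwq, hd₁]) (by rw [reassoc_of% hwq, hd₂]) f ?_⟩
  rw [reassoc_of% hg, Category.comp_id]

/-- in a type-theoretic fibration category, acyclic cofibrations are
right homotopy equivalences. -/
theorem stmt18 {C : Type u} [Category.{v} C]
    (T : C) (hT : IsTerminal T)
    (Fib : MorphismProperty C)
    (hiso : ∀ {X Y : C} (f : X ⟶ Y), IsIso f → Fib f)
    (hterm : ∀ (X : C) (t : X ⟶ T), Fib t)
    (hpb : ∀ {P X Y Z : C} (fst : P ⟶ X) (snd : P ⟶ Y) (f : X ⟶ Z) (g : Y ⟶ Z),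
      IsPullback fst snd f g → Fib g → Fib fst)
    (hfact : ∀ {X Y : C} (f : X ⟶ Y), ∃ (Z : C) (i : X ⟶ Z) (p : Z ⟶ Y),
      (∀ {V W : C} (m : V ⟶ W), Fib m → HasLiftingProperty i m) ∧ Fib p ∧ i ≫ p = f)
    {A B : C} (f : A ⟶ B)
    (hf : ∀ {V W : C} (m : V ⟶ W), Fib m → HasLiftingProperty f m)
    (BB : C) (p₁ p₂ : BB ⟶ B) (hBB : IsLimit (BinaryFan.mk p₁ p₂))
    (d : B ⟶ BB) (hd₁ : d ≫ p₁ = 𝟙 B) (hd₂ : d ≫ p₂ = 𝟙 B)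
    (PB : C) (w : B ⟶ PB) (q : PB ⟶ BB)
    (hw : ∀ {V W : C} (m : V ⟶ W), Fib m → HasLiftingProperty w m)
    (hq : Fib q) (hwq : w ≫ q = d) :
    ∃ g : B ⟶ A, f ≫ g = 𝟙 A ∧
      ∃ h : B ⟶ PB, h ≫ q ≫ p₁ = g ≫ f ∧ h ≫ q ≫ p₂ = 𝟙 B :=
  stmt18_general T hT Fib hterm f hf BB p₁ p₂ hBB d hd₁ hd₂ PB w q hq hwq
end
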